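/- arXiv:2406.00879 — 8 statements merged into one kernel-verified Lean document; each statement's English description precedes it below -/
import Mathlib

section
/- Equilibrium Propagation formula (Theorem 1): Suppose that for all (w, β) the stationarity condition ∇ₛ𝓔(w, s(w,β)) + β ∇𝓒(s(w,β)) = 0 holds. Then for every w, the gradient with respect to w of the map w ↦ 𝓒(s(w,0)) equals the derivative at β = 0 of the map β ↦ ∇_w 𝓔(w, s(w,β)); that is, ∇_w [𝓒(s(w,0))] = d/dβ|_{β=0} [∂𝓔/∂w (w, s(w,β))]. -/
/-!
Along the stationary family, consider the total energy
`F(w, β) = 𝓔(w, s(w, β)) + β 𝓒(s(w, β))`. When it is differentiated, every term passing through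
`s` is multiplied by `∇ₛ𝓔 + β∇𝓒`, which vanishes at `s(w, β)`; hence `∂F/∂w = ∂𝓔/∂w (w, s(w, β))`
and `∂F/∂β = 𝓒(s(w, β))`. The theorem is the symmetry of the mixed second partials of `F`,
which holds because its derivative is differentiable even though `s` is only `C¹`.
-/

open InnerProductSpace ContinuousLinearMap

section MixedPartials

variable {E : Type*} [NormedAddCommGroup E] [NormedSpace ℝ E]

/-- Symmetry of the mixed second partials of `f : E × ℝ → ℝ`, stated through its derivative `f'`. -/
theorem hasDerivAt_comp_inl_of_hasFDerivAt {f : E × ℝ → ℝ} {f' : E × ℝ → E × ℝ →L[ℝ] ℝ}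
    {x : E × ℝ} (hf : ∀ y, HasFDerivAt f (f' y) y) (hf' : DifferentiableAt ℝ f' x) :
    HasDerivAt (fun t => (f' (x.1, t)).comp (inl ℝ E ℝ))
      (fderiv ℝ (fun w => f' (w, x.2) (0, 1)) x.1) x.2 := by
  obtain ⟨w, β⟩ := x
  set D := fderiv ℝ f' (w, β)
  have hD : HasFDerivAt f' D (w, β) := hf'.hasFDerivAt
  have h_t : HasDerivAt (fun t => f' (w, t)) (D (0, 1)) β :=
    hD.comp_hasDerivAt β ((hasDerivAt_const β w).prodMk (hasDerivAt_id β))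
  have h_w : HasFDerivAt (fun w => f' (w, β) (0, 1)) ((D.comp (inl ℝ E ℝ)).flip (0, 1)) w := by
    have h_slice : HasFDerivAt (fun w => f' (w, β)) (D.comp (inl ℝ E ℝ)) w :=
      hD.comp w (hasFDerivAt_prodMk_left w β)
    simpa using h_slice.clm_apply (hasFDerivAt_const ((0, 1) : E × ℝ) w)
  rw [h_w.fderiv]
  convert h_t.clm_comp (hasDerivAt_const β (inl ℝ E ℝ)) using 1
  ext u
  simpa using second_derivative_symmetric hf hD (u, 0) (0, 1)

end MixedPartials

section TotalEnergy

variable {W S : Type*} [NormedAddCommGroup W] [NormedSpace ℝ W] [NormedAddCommGroup S]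
  [NormedSpace ℝ S] {𝓔 : W × S → ℝ} {𝓒 : S → ℝ} {s : W × ℝ → S}

theorem hasFDerivAt_totalEnergy {y : W × ℝ} (h𝓔 : DifferentiableAt ℝ 𝓔 (y.1, s y))
    (h𝓒 : DifferentiableAt ℝ 𝓒 (s y)) (hs : DifferentiableAt ℝ s y)
    (hstat : (fderiv ℝ 𝓔 (y.1, s y)).comp (inr ℝ W S) + y.2 • fderiv ℝ 𝓒 (s y) = 0) :
    HasFDerivAt (fun y : W × ℝ => 𝓔 (y.1, s y) + y.2 * 𝓒 (s y))
      (((fderiv ℝ 𝓔 (y.1, s y)).comp (inl ℝ W S)).comp (fst ℝ W ℝ) + 𝓒 (s y) • snd ℝ W ℝ) y := by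
  have h_energy := h𝓔.hasFDerivAt.comp y (hasFDerivAt_fst.prodMk hs.hasFDerivAt)
  have h_cost := hasFDerivAt_snd.mul (h𝓒.hasFDerivAt.comp y hs.hasFDerivAt)
  refine (h_energy.add h_cost).congr_fderiv (ext fun p => ?_)
  have h_split : (p.1, fderiv ℝ s y p) = inl ℝ W S p.1 + inr ℝ W S (fderiv ℝ s y p) := by simp
  have h_stat_p := congrArg (fun L : S →L[ℝ] ℝ => L (fderiv ℝ s y p)) hstat
  simp only [add_apply, comp_apply, smul_apply, zero_apply, smul_eq_mul] at h_stat_p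
  simp only [add_apply, comp_apply, prod_apply, coe_fst', coe_snd', smul_apply, smul_eq_mul,
    Function.comp_apply, h_split, map_add]
  linarith

theorem hasDerivAt_fderiv_comp_inl_of_stationary (h𝓔 : ContDiff ℝ 2 𝓔)
    (h𝓒 : Differentiable ℝ 𝓒) (hs : Differentiable ℝ s)
    (hstat : ∀ y : W × ℝ, (fderiv ℝ 𝓔 (y.1, s y)).comp (inr ℝ W S) + y.2 • fderiv ℝ 𝓒 (s y) = 0)
    (x : W × ℝ) :
    HasDerivAt (fun β => (fderiv ℝ 𝓔 (x.1, s (x.1, β))).comp (inl ℝ W S))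
      (fderiv ℝ (fun w => 𝓒 (s (w, x.2))) x.1) x.2 := by
  have h𝓔' : Differentiable ℝ (fderiv ℝ 𝓔) :=
    (h𝓔.fderiv_right (m := 1) (by norm_num)).differentiable one_ne_zero
  have h_deriv : DifferentiableAt ℝ (fun y : W × ℝ =>
      ((fderiv ℝ 𝓔 (y.1, s y)).comp (inl ℝ W S)).comp (fst ℝ W ℝ) + 𝓒 (s y) • snd ℝ W ℝ) x :=
    (((h𝓔'.comp (differentiable_fst.prodMk hs)) x).clm_comp (differentiableAt_const _)
      |>.clm_comp (differentiableAt_const _)).add (((h𝓒.comp hs) x).smul_const _)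
  simpa [comp_assoc, Prod.mk_zero_zero] using hasDerivAt_comp_inl_of_hasFDerivAt
    (fun y => hasFDerivAt_totalEnergy (h𝓔.differentiable (by norm_num) _) (h𝓒 _) (hs y) (hstat y))
    h_deriv

end TotalEnergy

section Gradient

variable {W S : Type*} [NormedAddCommGroup W] [NormedAddCommGroup S] {f : W × S → ℝ}
  {w : W} {z : S}

theorem hasGradientAt_comp_prodMk_left [InnerProductSpace ℝ W] [CompleteSpace W]
    [NormedSpace ℝ S] (hf : DifferentiableAt ℝ f (w, z)) :
    HasGradientAt (fun w' => f (w', z))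
      ((toDual ℝ W).symm ((fderiv ℝ f (w, z)).comp (inl ℝ W S))) w :=
  hasFDerivAt_iff_hasGradientAt.mp (hf.hasFDerivAt.comp w (hasFDerivAt_prodMk_left w z))

theorem hasGradientAt_comp_prodMk_right [NormedSpace ℝ W] [InnerProductSpace ℝ S]
    [CompleteSpace S] (hf : DifferentiableAt ℝ f (w, z)) :
    HasGradientAt (fun z' => f (w, z'))
      ((toDual ℝ S).symm ((fderiv ℝ f (w, z)).comp (inr ℝ W S))) z :=
  hasFDerivAt_iff_hasGradientAt.mp (hf.hasFDerivAt.comp z (hasFDerivAt_prodMk_right w z))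

end Gradient

/-- **Equilibrium Propagation formula (Theorem 1).**
Let `𝓔 : ℝ^M × ℝ^n → ℝ` be a C² energy function, `𝓒 : ℝ^n → ℝ` a C² cost function, and
`s : ℝ^M × ℝ → ℝ^n` a C¹ family of stationary states of the total energy `𝓔 + β𝓒`,
i.e. `∇ₛ𝓔(w, s(w,β)) + β ∇𝓒(s(w,β)) = 0` for all `(w, β)`.  Then the gradient with
respect to `w` of `w ↦ 𝓒(s(w,0))` equals the derivative at `β = 0` of
`β ↦ ∂𝓔/∂w (w, s(w,β))`. -/
theorem equilibrium_propagation
    {M n : ℕ}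
    (𝓔 : EuclideanSpace ℝ (Fin M) × EuclideanSpace ℝ (Fin n) → ℝ)
    (𝓒 : EuclideanSpace ℝ (Fin n) → ℝ)
    (s : EuclideanSpace ℝ (Fin M) × ℝ → EuclideanSpace ℝ (Fin n))
    (h𝓔 : ContDiff ℝ 2 𝓔) (h𝓒 : ContDiff ℝ 2 𝓒) (hs : ContDiff ℝ 1 s)
    (hstat : ∀ (w : EuclideanSpace ℝ (Fin M)) (β : ℝ),
      gradient (fun σ => 𝓔 (w, σ)) (s (w, β)) + β • gradient 𝓒 (s (w, β)) = 0) :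
    ∀ w : EuclideanSpace ℝ (Fin M),
      gradient (fun w' => 𝓒 (s (w', 0))) w
        = deriv (fun β : ℝ => gradient (fun w' => 𝓔 (w', s (w, β))) w) 0 := by
  intro w
  have h𝓔d : Differentiable ℝ 𝓔 := h𝓔.differentiable (by norm_num)
  have hstat_fderiv (y : EuclideanSpace ℝ (Fin M) × ℝ) :
      (fderiv ℝ 𝓔 (y.1, s y)).comp (inr ℝ _ _) + y.2 • fderiv ℝ 𝓒 (s y) = 0 := by
    have h := congrArg (toDual ℝ _) (hstat y.1 y.2)
    rwa [map_add, map_smul, (hasGradientAt_comp_prodMk_right (h𝓔d _)).gradient, gradient,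
      LinearIsometryEquiv.apply_symm_apply, LinearIsometryEquiv.apply_symm_apply, map_zero] at h
  have h_fderiv := hasDerivAt_fderiv_comp_inl_of_stationary h𝓔 (h𝓒.differentiable (by norm_num))
    (hs.differentiable one_ne_zero) hstat_fderiv (w, 0)
  have h_grad := (toDual ℝ (EuclideanSpace ℝ (Fin M))).symm.toContinuousLinearEquiv.hasFDerivAt
    |>.comp_hasDerivAt (0 : ℝ) h_fderiv
  simp_rw [(hasGradientAt_comp_prodMk_left (h𝓔d _)).gradient]
  exact h_grad.deriv.symm
end

section
/- Exact gradient of the classical contrastive function (envelope property): Fix β ≠ 0 and suppose that for all w the stationarity conditions ∇ₛ𝓔(w, s_β(w)) + β ∇𝓒(s_β(w)) = 0 and ∇ₛ𝓔(w, s₀(w)) = 0 hold. Define the contrastive function 𝓛_β(w) = (1/β)[𝓔(w, s_β(w)) + β𝓒(s_β(w)) − 𝓔(w, s₀(w))]. Then 𝓛_β is differentiable and ∇_w 𝓛_β(w) = (1/β)[∂𝓔/∂w(w, s_β(w)) − ∂𝓔/∂w(w, s₀(w))], i.e. the contrastive learning rule performs exact gradient descent on 𝓛_β. -/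
/-! Envelope theorem: at a stationary state `s w` the partial derivative of `f` in the state
vanishes, so by the chain rule the motion of `s w` contributes nothing to the derivative of
`w ↦ f (w, s w)`, which therefore equals the partial derivative in `w`. Apply this to
`𝓔 + β 𝓒` along `s_β` and to `𝓔` along `s₀`, and take the difference. -/

open InnerProductSpace ContinuousLinearMap

section Envelope

variable {𝕜 E F G : Type*} [NontriviallyNormedField 𝕜]
  [NormedAddCommGroup E] [NormedSpace 𝕜 E] [NormedAddCommGroup F] [NormedSpace 𝕜 F]
  [NormedAddCommGroup G] [NormedSpace 𝕜 G]

theorem HasFDerivAt.comp_prodMk_of_stationary {f : E × F → G} {s : E → F} {w : E}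
    {L : E →L[𝕜] G} (hf : DifferentiableAt 𝕜 f (w, s w)) (hs : DifferentiableAt 𝕜 s w)
    (hstat : HasFDerivAt (fun σ => f (w, σ)) (0 : F →L[𝕜] G) (s w))
    (hpartial : HasFDerivAt (fun w' => f (w', s w)) L w) :
    HasFDerivAt (fun w' => f (w', s w')) L w := by
  set D := fderiv 𝕜 f (w, s w)
  have hD := hf.hasFDerivAt
  have hinr : D.comp (inr 𝕜 E F) = 0 :=
    (hD.comp (s w) (hasFDerivAt_prodMk_right w (s w))).unique hstat
  have hinl : D.comp (inl 𝕜 E F) = L :=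
    (hD.comp w (hasFDerivAt_prodMk_left w (s w))).unique hpartial
  refine (hD.comp w ((hasFDerivAt_id w).prodMk hs.hasFDerivAt)).congr_fderiv ?_
  ext v
  calc D (v, fderiv 𝕜 s w v) = D (inl 𝕜 E F v) + D (inr 𝕜 E F (fderiv 𝕜 s w v)) := by
        rw [← map_add]; simp
    _ = L v := by rw [← hinl, ← D.comp_apply (inr 𝕜 E F), hinr, zero_apply, add_zero, comp_apply]

end Envelope

theorem exact_gradient_of_contrastive_function_general
    {M n : ℕ} (β : ℝ)
    (𝓔 : EuclideanSpace ℝ (Fin M) × EuclideanSpace ℝ (Fin n) → ℝ)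
    (𝓒 : EuclideanSpace ℝ (Fin n) → ℝ)
    (sβ s₀ : EuclideanSpace ℝ (Fin M) → EuclideanSpace ℝ (Fin n))
    (h𝓔 : ContDiff ℝ 1 𝓔) (h𝓒 : ContDiff ℝ 1 𝓒)
    (hsβ : Differentiable ℝ sβ) (hs₀ : Differentiable ℝ s₀)
    (hstatβ : ∀ w, gradient (fun σ => 𝓔 (w, σ)) (sβ w) + β • gradient 𝓒 (sβ w) = 0)
    (hstat0 : ∀ w, gradient (fun σ => 𝓔 (w, σ)) (s₀ w) = 0) :
    ∀ w, HasGradientAt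
      (fun w' => (1 / β) * (𝓔 (w', sβ w') + β * 𝓒 (sβ w') - 𝓔 (w', s₀ w')))
      ((1 / β) • (gradient (fun w' => 𝓔 (w', sβ w)) w - gradient (fun w' => 𝓔 (w', s₀ w)) w))
      w := by
  intro w
  have h𝓔d : Differentiable ℝ 𝓔 := h𝓔.differentiable one_ne_zero
  have h𝓒d : Differentiable ℝ 𝓒 := h𝓒.differentiable one_ne_zero
  have hstate : ∀ σ, HasFDerivAt (fun σ' => 𝓔 (w, σ')) (fderiv ℝ (fun σ' => 𝓔 (w, σ')) σ) σ :=
    fun σ => (h𝓔d.comp (differentiable_const w |>.prodMk differentiable_id) σ).hasFDerivAt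
  have hweight : ∀ σ, HasFDerivAt (fun w' => 𝓔 (w', σ)) (fderiv ℝ (fun w' => 𝓔 (w', σ)) w) w :=
    fun σ => (h𝓔d.comp (differentiable_id.prodMk (differentiable_const σ)) w).hasFDerivAt
  have hcritβ : HasFDerivAt (fun σ => 𝓔 (w, σ) + β * 𝓒 σ) (0 : StrongDual ℝ _) (sβ w) := by
    have := (hstate (sβ w)).add ((h𝓒d (sβ w)).hasFDerivAt.const_mul β)
    rwa [← toDual_gradient, ← toDual_gradient, ← map_smul, ← map_add, hstatβ, map_zero] at this
  have hcrit0 : HasFDerivAt (fun σ => 𝓔 (w, σ)) (0 : StrongDual ℝ _) (s₀ w) := by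
    simpa [← toDual_gradient, hstat0] using hstate (s₀ w)
  have htotalβ : HasFDerivAt (fun w' => 𝓔 (w', sβ w') + β * 𝓒 (sβ w'))
      (fderiv ℝ (fun w' => 𝓔 (w', sβ w)) w) w :=
    HasFDerivAt.comp_prodMk_of_stationary (f := fun p => 𝓔 p + β * 𝓒 p.2)
      ((h𝓔d _).add (((h𝓒d _).comp _ differentiableAt_snd).const_mul β)) (hsβ w) hcritβ
      ((hweight (sβ w)).add_const (β * 𝓒 (sβ w)))
  have htotal0 : HasFDerivAt (fun w' => 𝓔 (w', s₀ w')) (fderiv ℝ (fun w' => 𝓔 (w', s₀ w)) w) w :=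
    HasFDerivAt.comp_prodMk_of_stationary (h𝓔d _) (hs₀ w) hcrit0 (hweight (s₀ w))
  rw [hasGradientAt_iff_hasFDerivAt, map_smul, map_sub, toDual_gradient, toDual_gradient]
  exact (htotalβ.sub htotal0).const_mul (1 / β)

/-- **Exact gradient of the classical contrastive function (envelope property).**
Fix `β ≠ 0`.  If `s_β(w)` is a stationary state of `𝓔(w,·) + β𝓒` and `s₀(w)` a stationary
state of `𝓔(w,·)` for all `w`, then the contrastive function
`𝓛_β(w) = (1/β)[𝓔(w, s_β(w)) + β𝓒(s_β(w)) − 𝓔(w, s₀(w))]` is differentiable with gradient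
`(1/β)[∂𝓔/∂w(w, s_β(w)) − ∂𝓔/∂w(w, s₀(w))]`. -/
theorem exact_gradient_of_contrastive_function
    {M n : ℕ} (β : ℝ) (hβ : β ≠ 0)
    (𝓔 : EuclideanSpace ℝ (Fin M) × EuclideanSpace ℝ (Fin n) → ℝ)
    (𝓒 : EuclideanSpace ℝ (Fin n) → ℝ)
    (sβ s₀ : EuclideanSpace ℝ (Fin M) → EuclideanSpace ℝ (Fin n))
    (h𝓔 : ContDiff ℝ 1 𝓔) (h𝓒 : ContDiff ℝ 1 𝓒)
    (hsβ : Differentiable ℝ sβ) (hs₀ : Differentiable ℝ s₀)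
    (hstatβ : ∀ w, gradient (fun σ => 𝓔 (w, σ)) (sβ w) + β • gradient 𝓒 (sβ w) = 0)
    (hstat0 : ∀ w, gradient (fun σ => 𝓔 (w, σ)) (s₀ w) = 0) :
    ∀ w, HasGradientAt
      (fun w' => (1 / β) * (𝓔 (w', sβ w') + β * 𝓒 (sβ w') - 𝓔 (w', s₀ w')))
      ((1 / β) • (gradient (fun w' => 𝓔 (w', sβ w)) w - gradient (fun w' => 𝓔 (w', s₀ w)) w))
      w :=
  exact_gradient_of_contrastive_function_general β 𝓔 𝓒 sβ s₀ h𝓔 h𝓒 hsβ hs₀ hstatβ hstat0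
end

section
/- Contrastive function bounds (classical): Let β > 0. Suppose s₀ is a global minimizer of s ↦ 𝓔(s), s_β is a global minimizer of s ↦ 𝓔(s) + β𝓒(s), and s_{−β} is a global minimizer of s ↦ 𝓔(s) − β𝓒(s). Then (1/β)[𝓔(s_β) + β𝓒(s_β) − 𝓔(s₀)] ≤ 𝓒(s₀) ≤ (−1/β)[𝓔(s_{−β}) − β𝓒(s_{−β}) − 𝓔(s₀)]; that is, the contrastive function with positive nudging is a lower bound and with negative nudging an upper bound of the true cost 𝓒(s₀). -/
theorem one_div_mul_sub_le_of_add_mul_le {a b c d β : ℝ} (hβ : 0 < β)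
    (h : a + β * b ≤ c + β * d) : 1 / β * (a + β * b - c) ≤ d := by
  rw [div_mul_eq_mul_div, div_le_iff₀ hβ]
  linarith

theorem le_neg_one_div_mul_sub_of_sub_mul_le {a b c d β : ℝ} (hβ : 0 < β)
    (h : a - β * b ≤ c - β * d) : d ≤ -1 / β * (a - β * b - c) := by
  rw [div_mul_eq_mul_div, le_div_iff₀ hβ]
  linarith

theorem contrastive_function_bounds_general
    {S : Type*} (𝓔 𝓒 : S → ℝ) (β : ℝ) (hβ : 0 < β)
    (s₀ sβ smβ : S)
    (hsβ : ∀ s', 𝓔 sβ + β * 𝓒 sβ ≤ 𝓔 s' + β * 𝓒 s')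
    (hsmβ : ∀ s', 𝓔 smβ - β * 𝓒 smβ ≤ 𝓔 s' - β * 𝓒 s') :
    (1 / β) * (𝓔 sβ + β * 𝓒 sβ - 𝓔 s₀) ≤ 𝓒 s₀ ∧
      𝓒 s₀ ≤ (-1 / β) * (𝓔 smβ - β * 𝓒 smβ - 𝓔 s₀) :=
  ⟨one_div_mul_sub_le_of_add_mul_le hβ (hsβ s₀),
    le_neg_one_div_mul_sub_of_sub_mul_le hβ (hsmβ s₀)⟩

/-- **Contrastive function bounds (classical).**
Let `β > 0`.  If `s₀` globally minimizes `𝓔`, `s_β` globally minimizes `𝓔 + β𝓒` and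
`s_{−β}` globally minimizes `𝓔 − β𝓒`, then
`(1/β)[𝓔(s_β) + β𝓒(s_β) − 𝓔(s₀)] ≤ 𝓒(s₀) ≤ (−1/β)[𝓔(s_{−β}) − β𝓒(s_{−β}) − 𝓔(s₀)]`. -/
theorem contrastive_function_bounds
    {S : Type*} (𝓔 𝓒 : S → ℝ) (β : ℝ) (hβ : 0 < β)
    (s₀ sβ smβ : S)
    (h₀ : ∀ s', 𝓔 s₀ ≤ 𝓔 s')
    (hsβ : ∀ s', 𝓔 sβ + β * 𝓒 sβ ≤ 𝓔 s' + β * 𝓒 s')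
    (hsmβ : ∀ s', 𝓔 smβ - β * 𝓒 smβ ≤ 𝓔 s' - β * 𝓒 s') :
    (1 / β) * (𝓔 sβ + β * 𝓒 sβ - 𝓔 s₀) ≤ 𝓒 s₀ ∧
      𝓒 s₀ ≤ (-1 / β) * (𝓔 smβ - β * 𝓒 smβ - 𝓔 s₀) :=
  contrastive_function_bounds_general 𝓔 𝓒 β hβ s₀ sβ smβ hsβ hsmβ
end

section
/- Differentiability of the nudged minimum energy at β = 0 (classical): Let S be a nonempty compact topological space, 𝓔, 𝓒 : S → ℝ continuous, and suppose 𝓔 has a unique global minimizer s₀ on S. Then the function F(β) = min over s ∈ S of (𝓔(s) + β𝓒(s)) is differentiable at β = 0 with F′(0) = 𝓒(s₀); equivalently, (F(β) − F(0))/β → 𝓒(s₀) as β → 0, so the contrastive function converges to the true cost as the nudging vanishes. -/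
/-!
For each `β` pick a minimizer `x β` of `𝓔 + β𝓒`. Comparing with `s₀`, which minimizes `𝓔`,
squeezes the increment: `β (𝓒 (x β) - 𝓒 s₀) ≤ F β - F 0 - β 𝓒 s₀ ≤ 0`. Since `𝓔` has an energy
gap outside any neighbourhood of `s₀` and `β𝓒` is uniformly small, `x β → s₀`, so the left
side is `o(β)`.
-/

open Filter Topology Set

theorem ciInf_eq_of_forall_le {ι α : Type*} [ConditionallyCompleteLattice α] {f : ι → α} {i₀ : ι}
    (h : ∀ i, f i₀ ≤ f i) : ⨅ i, f i = f i₀ :=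
  have : Nonempty ι := ⟨i₀⟩
  le_antisymm (ciInf_le ⟨f i₀, forall_mem_range.2 h⟩ i₀) (le_ciInf h)

section Envelope

variable {S : Type*} {f g : S → ℝ} {s₀ : S} {x : ℝ → S}

theorem abs_iInf_add_mul_sub_le (hs₀ : ∀ s, f s₀ ≤ f s)
    (hx : ∀ β s, f (x β) + β * g (x β) ≤ f s + β * g s) (β : ℝ) :
    |(⨅ s, f s + β * g s) - (⨅ s, f s + 0 * g s) - β * g s₀| ≤ |β| * |g (x β) - g s₀| := by
  rw [ciInf_eq_of_forall_le (hx β), ciInf_eq_of_forall_le (f := fun s => f s + 0 * g s)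
    (by simpa using hs₀), zero_mul, add_zero, ← abs_mul, abs_le]
  constructor <;> linarith [hx β s₀, hs₀ (x β), neg_abs_le (β * (g (x β) - g s₀)),
    abs_nonneg (β * (g (x β) - g s₀))]

/-- Envelope theorem at `β = 0`. -/
theorem hasDerivAt_iInf_add_mul (hs₀ : ∀ s, f s₀ ≤ f s)
    (hx : ∀ β s, f (x β) + β * g (x β) ≤ f s + β * g s)
    (hg : Tendsto (fun β => g (x β)) (𝓝 0) (𝓝 (g s₀))) :
    HasDerivAt (fun β => ⨅ s, f s + β * g s) (g s₀) 0 := by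
  rw [hasDerivAt_iff_isLittleO, Asymptotics.isLittleO_iff]
  intro ε hε
  filter_upwards [Metric.tendsto_nhds.mp hg ε hε] with β hβ
  simp only [sub_zero, smul_eq_mul, Real.norm_eq_abs]
  calc _ ≤ |β| * |g (x β) - g s₀| := abs_iInf_add_mul_sub_le hs₀ hx β
    _ ≤ |β| * ε := by gcongr; exact (Real.dist_eq _ _ ▸ hβ).le
    _ = ε * |β| := mul_comm _ _

end Envelope

section UniqueMinimizer

variable {S : Type*} [TopologicalSpace S] [CompactSpace S] {f : S → ℝ} {s₀ : S}

theorem exists_gt_forall_le_of_notMem_nhds (hf : Continuous f) (huniq : ∀ s, s ≠ s₀ → f s₀ < f s)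
    {U : Set S} (hU : U ∈ 𝓝 s₀) : ∃ a, f s₀ < a ∧ ∀ s ∉ U, a ≤ f s := by
  have hK : IsCompact (interior U)ᶜ := isOpen_interior.isClosed_compl.isCompact
  obtain ⟨a, ha, hfa⟩ := hK.exists_forall_le' hf.continuousOn fun s hs =>
    huniq s fun h => hs (h ▸ mem_interior_iff_mem_nhds.2 hU)
  exact ⟨a, ha, fun s hs => hfa s fun h => hs (interior_subset h)⟩

theorem tendsto_of_forall_add_mul_le (hf : Continuous f) (huniq : ∀ s, s ≠ s₀ → f s₀ < f s)
    {g : S → ℝ} {M : ℝ} (hM : ∀ s, |g s| ≤ M) {x : ℝ → S}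
    (hx : ∀ β s, f (x β) + β * g (x β) ≤ f s + β * g s) :
    Tendsto x (𝓝 0) (𝓝 s₀) := by
  refine tendsto_iff_forall_eventually_mem.2 fun U hU => ?_
  obtain ⟨a, ha, hfa⟩ := exists_gt_forall_le_of_notMem_nhds hf huniq hU
  have hsmall : ∀ᶠ β in 𝓝 (0 : ℝ), |β| * (2 * M) < a - f s₀ := by
    refine ((by fun_prop : Continuous fun β : ℝ => |β| * (2 * M)).tendsto 0).eventually
      (gt_mem_nhds ?_)
    simpa using ha
  filter_upwards [hsmall] with β hβ
  by_contra hxU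
  have hperturb : ∀ s, |β * g s| ≤ |β| * M := fun s => by
    rw [abs_mul]; exact mul_le_mul_of_nonneg_left (hM s) (abs_nonneg β)
  linarith [hx β s₀, hfa _ hxU, abs_le.mp (hperturb s₀), abs_le.mp (hperturb (x β))]

end UniqueMinimizer

theorem nudged_minimum_energy_hasDerivAt_zero_general
    {S : Type*} [TopologicalSpace S] [CompactSpace S]
    (𝓔 𝓒 : S → ℝ) (h𝓔 : Continuous 𝓔) (h𝓒 : Continuous 𝓒)
    (s₀ : S) (huniq : ∀ s, s ≠ s₀ → 𝓔 s₀ < 𝓔 s) :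
    HasDerivAt (fun β : ℝ => ⨅ s : S, (𝓔 s + β * 𝓒 s)) (𝓒 s₀) 0 := by
  have hs₀ : ∀ s, 𝓔 s₀ ≤ 𝓔 s := fun s =>
    (eq_or_ne s s₀).elim (fun h => h ▸ le_rfl) fun h => (huniq s h).le
  choose x _ hx using fun β : ℝ => isCompact_univ.exists_isMinOn ⟨s₀, mem_univ _⟩
    (f := fun s => 𝓔 s + β * 𝓒 s) (by fun_prop)
  have hx' : ∀ β s, 𝓔 (x β) + β * 𝓒 (x β) ≤ 𝓔 s + β * 𝓒 s := fun β =>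
    isMinOn_univ_iff.mp (hx β)
  obtain ⟨M, hM⟩ := isCompact_univ.exists_bound_of_continuousOn h𝓒.continuousOn
  have hxs₀ : Tendsto x (𝓝 0) (𝓝 s₀) :=
    tendsto_of_forall_add_mul_le h𝓔 huniq (fun s => hM s (mem_univ s)) hx'
  exact hasDerivAt_iInf_add_mul hs₀ hx' ((h𝓒.tendsto s₀).comp hxs₀)

/-- **Differentiability of the nudged minimum energy at `β = 0` (classical).**
Let `S` be a nonempty compact topological space, `𝓔, 𝓒 : S → ℝ` continuous, and suppose
`𝓔` has a unique global minimizer `s₀`.  Then `F(β) = min_{s ∈ S} (𝓔(s) + β𝓒(s))` is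
differentiable at `β = 0` with `F′(0) = 𝓒(s₀)`. -/
theorem nudged_minimum_energy_hasDerivAt_zero
    {S : Type*} [TopologicalSpace S] [CompactSpace S] [Nonempty S]
    (𝓔 𝓒 : S → ℝ) (h𝓔 : Continuous 𝓔) (h𝓒 : Continuous 𝓒)
    (s₀ : S) (huniq : ∀ s, s ≠ s₀ → 𝓔 s₀ < 𝓔 s) :
    HasDerivAt (fun β : ℝ => ⨅ s : S, (𝓔 s + β * 𝓒 s)) (𝓒 s₀) 0 :=
  nudged_minimum_energy_hasDerivAt_zero_general 𝓔 𝓒 h𝓔 h𝓒 s₀ huniq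
end

section
/- Quantum Equilibrium Propagation formula (Theorem 2): Suppose H : ℝ^M → (E →L[ℂ] E) is a twice continuously differentiable family of self-adjoint operators, Ĉ : E →L[ℂ] E is self-adjoint, ψ : ℝ^M × ℝ → E is twice continuously differentiable with ‖ψ(w,β)‖ = 1 for all (w,β), λ : ℝ^M × ℝ → ℝ is twice continuously differentiable, and for all (w,β) the eigenvector equation (H(w) + β • Ĉ)(ψ(w,β)) = λ(w,β) • ψ(w,β) holds. Then for every w and every coordinate index k, the partial derivative with respect to w_k of the map w ↦ re⟨ψ(w,0), Ĉ ψ(w,0)⟩ equals the derivative at β = 0 of the map β ↦ re⟨ψ(w,β), (∂H/∂w_k)(w) ψ(w,β)⟩. -/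
/-!
Differentiating the eigenvalue equation against the unit eigenvector (Hellmann–Feynman) gives
`∂Λ/∂v = re⟨ψ, (∂T/∂v) ψ⟩` for the total Hamiltonian `T(w, β) = H(w) + β Ĉ`: the terms containing
the derivative of `ψ` collapse to `2 Λ re⟨ψ, ∂ψ/∂v⟩`, which vanishes because `‖ψ‖ = 1`.
Hence `re⟨ψ, Ĉ ψ⟩ = ∂Λ/∂β` and `re⟨ψ, (∂H/∂w_k) ψ⟩ = ∂Λ/∂w_k`, and the theorem is the symmetry of
the mixed second partial derivatives of the `C²` function `Λ`.
-/

open ContinuousLinearMap RCLike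

section PartialDerivatives

variable {𝕜 E F X G : Type*} [NontriviallyNormedField 𝕜]
  [NormedAddCommGroup E] [NormedSpace 𝕜 E] [NormedAddCommGroup F] [NormedSpace 𝕜 F]
  [NormedAddCommGroup X] [NormedSpace 𝕜 X] [NormedAddCommGroup G] [NormedSpace 𝕜 G]

theorem fderiv_apply_comp_prodMk_left {g : E × F → (X →L[𝕜] G)} {x : E} {y : F}
    (hg : DifferentiableAt 𝕜 g (x, y)) (a : X) (u : E) :
    fderiv 𝕜 (fun x' => g (x', y) a) x u = fderiv 𝕜 g (x, y) (u, 0) a := by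
  have hc : HasFDerivAt (fun x' => g (x', y)) (fderiv 𝕜 g (x, y) ∘L inl 𝕜 E F) x :=
    hg.hasFDerivAt.comp x (hasFDerivAt_prodMk_left x y)
  simp [(hc.clm_apply (hasFDerivAt_const a x)).fderiv]

theorem fderiv_apply_comp_prodMk_right {g : E × F → (X →L[𝕜] G)} {x : E} {y : F}
    (hg : DifferentiableAt 𝕜 g (x, y)) (a : X) (v : F) :
    fderiv 𝕜 (fun y' => g (x, y') a) y v = fderiv 𝕜 g (x, y) (0, v) a := by
  have hc : HasFDerivAt (fun y' => g (x, y')) (fderiv 𝕜 g (x, y) ∘L inr 𝕜 E F) y :=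
    hg.hasFDerivAt.comp y (hasFDerivAt_prodMk_right x y)
  simp [(hc.clm_apply (hasFDerivAt_const a y)).fderiv]

theorem ContDiffAt.fderiv_partial_comm {n : WithTop ℕ∞} {f : E × F → G} {x : E} {y : F}
    (hf : ContDiffAt 𝕜 n f (x, y)) (hn : minSmoothness 𝕜 2 ≤ n) (u : E) (v : F) :
    fderiv 𝕜 (fun x' => fderiv 𝕜 f (x', y) (0, v)) x u
      = fderiv 𝕜 (fun y' => fderiv 𝕜 f (x, y') (u, 0)) y v := by
  have hdf : DifferentiableAt 𝕜 (fderiv 𝕜 f) (x, y) :=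
    (hf.fderiv_right (m := 1) (le_trans le_minSmoothness hn)).differentiableAt one_ne_zero
  rw [fderiv_apply_comp_prodMk_left hdf, fderiv_apply_comp_prodMk_right hdf,
    (hf.isSymmSndFDerivAt hn).eq]

end PartialDerivatives

section HellmannFeynman

variable {𝕜 E F : Type*} [RCLike 𝕜] [NormedAddCommGroup E] [InnerProductSpace 𝕜 E]
  [NormedSpace ℝ E] [NormedAddCommGroup F] [NormedSpace ℝ F]

local notation "⟪" x ", " y "⟫" => inner 𝕜 x y

theorem re_inner_fderiv_eq_zero_of_norm_eq {ψ : F → E} {p : F} {r : ℝ}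
    (hψ : DifferentiableAt ℝ ψ p) (hnorm : ∀ q, ‖ψ q‖ = r) (v : F) :
    re ⟪ψ p, fderiv ℝ ψ p v⟫ = 0 := by
  have hconst : (fun q => ⟪ψ q, ψ q⟫) = fun _ => ((r ^ 2 : ℝ) : 𝕜) := by
    funext q
    rw [inner_self_eq_norm_sq_to_K, hnorm]
    push_cast
    rfl
  have h := fderiv_inner_apply 𝕜 hψ hψ v
  rw [hconst, fderiv_const_apply, zero_apply] at h
  have h_re := congrArg re h
  rw [map_add, inner_re_symm (fderiv ℝ ψ p v), map_zero] at h_re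
  linarith

variable [IsScalarTower ℝ 𝕜 E]

theorem hellmann_feynman_s8 {T : F → E →L[𝕜] E} {ψ : F → E} {Λ : F → ℝ} {p : F}
    (hT : DifferentiableAt ℝ T p) (hψ : DifferentiableAt ℝ ψ p)
    (hTp : (T p : E →ₗ[𝕜] E).IsSymmetric) (hnorm : ∀ q, ‖ψ q‖ = 1)
    (heig : ∀ q, T q (ψ q) = (Λ q : 𝕜) • ψ q) (v : F) :
    fderiv ℝ Λ p v = re ⟪ψ p, fderiv ℝ T p v (ψ p)⟫ := by
  have hΛ : Λ = fun q => re ⟪ψ q, (T q).restrictScalars ℝ (ψ q)⟫ := by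
    funext q
    rw [coe_restrictScalars', heig, inner_smul_right, inner_self_eq_norm_sq_to_K, hnorm]
    simp
  have hTψ : HasFDerivAt (fun q => (T q).restrictScalars ℝ (ψ q))
      ((T p).restrictScalars ℝ ∘L fderiv ℝ ψ p
        + (restrictScalarsL 𝕜 E E ℝ ℝ ∘L fderiv ℝ T p).flip (ψ p)) p :=
    ((restrictScalarsL 𝕜 E E ℝ ℝ).hasFDerivAt.comp p hT.hasFDerivAt).clm_apply hψ.hasFDerivAt
  have hexp : HasFDerivAt (fun q => re ⟪ψ q, (T q).restrictScalars ℝ (ψ q)⟫) _ p :=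
    (reCLM : 𝕜 →L[ℝ] ℝ).hasFDerivAt.comp p (hψ.hasFDerivAt.inner 𝕜 hTψ)
  have hsym : ⟪ψ p, T p (fderiv ℝ ψ p v)⟫ = Λ p * ⟪ψ p, fderiv ℝ ψ p v⟫ := by
    rw [← coe_coe, ← hTp, coe_coe, heig, inner_smul_left, conj_ofReal]
  rw [hΛ, hexp.fderiv]
  simp only [coe_restrictScalars', comp_apply, ContinuousLinearMap.prod_apply, add_apply,
    flip_apply, coe_restrict_scalarsL', fderivInnerCLM_apply, reCLM_apply, map_add]
  rw [inner_add_right, hsym, heig p, inner_smul_right, map_add, re_ofReal_mul, re_ofReal_mul,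
    inner_re_symm (fderiv ℝ ψ p v), re_inner_fderiv_eq_zero_of_norm_eq hψ hnorm]
  ring

end HellmannFeynman

/-- **Quantum Equilibrium Propagation formula (Theorem 2).**
Let `H : ℝ^M → (E →L[ℂ] E)` be a C² family of self-adjoint Hamiltonians, `Ĉ` a
self-adjoint cost observable, and `ψ(w,β)` a C² family of unit eigenvectors of the total
Hamiltonian `H(w) + β Ĉ` with C² eigenvalue `Λ(w,β)`.  Then for every `w` and coordinate
`k`, the partial derivative in `w_k` of `w ↦ re⟨ψ(w,0), Ĉ ψ(w,0)⟩` equals the derivative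
at `β = 0` of `β ↦ re⟨ψ(w,β), (∂H/∂w_k)(w) ψ(w,β)⟩`. -/
theorem quantum_equilibrium_propagation
    {E : Type*} [NormedAddCommGroup E] [InnerProductSpace ℂ E] [FiniteDimensional ℂ E]
    {M : ℕ}
    (H : EuclideanSpace ℝ (Fin M) → (E →L[ℂ] E))
    (hH : ContDiff ℝ 2 H)
    (hHsa : ∀ w, IsSelfAdjoint (H w))
    (C : E →L[ℂ] E) (hC : IsSelfAdjoint C)
    (ψ : EuclideanSpace ℝ (Fin M) × ℝ → E)
    (hψ : ContDiff ℝ 2 ψ)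
    (hψnorm : ∀ w β, ‖ψ (w, β)‖ = 1)
    (Λ : EuclideanSpace ℝ (Fin M) × ℝ → ℝ)
    (hΛ : ContDiff ℝ 2 Λ)
    (heig : ∀ (w : EuclideanSpace ℝ (Fin M)) (β : ℝ), (H w + (β : ℂ) • C) (ψ (w, β)) = ((Λ (w, β) : ℝ) : ℂ) • ψ (w, β)) :
    ∀ (w : EuclideanSpace ℝ (Fin M)) (k : Fin M),
      fderiv ℝ (fun w' => (inner ℂ (ψ (w', 0)) (C (ψ (w', 0))) : ℂ).re) w
          (EuclideanSpace.single k 1)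
        = deriv (fun β : ℝ =>
            (inner ℂ (ψ (w, β)) ((fderiv ℝ H w (EuclideanSpace.single k 1)) (ψ (w, β))) : ℂ).re)
            0 := by
  set T : EuclideanSpace ℝ (Fin M) × ℝ → (E →L[ℂ] E) := fun q => H q.1 + (q.2 : ℂ) • C
  have hcoe : ∀ p, HasFDerivAt (fun q : EuclideanSpace ℝ (Fin M) × ℝ => (q.2 : ℂ))
      (Complex.ofRealCLM.comp (snd ℝ _ ℝ)) p :=
    fun p => Complex.ofRealCLM.hasFDerivAt.comp p hasFDerivAt_snd
  have hT : ∀ p, HasFDerivAt T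
      ((fderiv ℝ H p.1).comp (fst ℝ _ ℝ) + (Complex.ofRealCLM.comp (snd ℝ _ ℝ)).smulRight C) p :=
    fun p => ((hH.differentiable two_ne_zero p.1).hasFDerivAt.comp p hasFDerivAt_fst).add
      ((hcoe p).smul_const C)
  have hΛ_deriv : ∀ p v, fderiv ℝ Λ p v
      = (inner ℂ (ψ p) ((fderiv ℝ H p.1 v.1 + (v.2 : ℂ) • C) (ψ p))).re := by
    intro p v
    rw [hellmann_feynman_s8 (hT p).differentiableAt (hψ.differentiable two_ne_zero p)
      ((isSelfAdjoint_iff_isSymmetric.mp (hHsa p.1)).add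
        ((isSelfAdjoint_iff_isSymmetric.mp hC).smul (Complex.conj_ofReal p.2)))
      (fun q => hψnorm q.1 q.2) (fun q => heig q.1 q.2), (hT p).fderiv]
    simp [inner_add_right, inner_smul_right_eq_smul]
  intro w k
  calc _ = fderiv ℝ (fun w' => fderiv ℝ Λ (w', 0) (0, 1)) w (EuclideanSpace.single k 1) := by
          simp [hΛ_deriv]
    _ = fderiv ℝ (fun β => fderiv ℝ Λ (w, β) (EuclideanSpace.single k 1, 0)) 0 1 :=
          hΛ.contDiffAt.fderiv_partial_comm (by simp) _ _
    _ = _ := by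
          rw [fderiv_apply_one_eq_deriv]
          simp [hΛ_deriv]
end

section
/- Hellmann–Feynman identity for a differentiable family of eigenstates: Let H : ℝ → (E →L[ℂ] E) be a differentiable family of self-adjoint operators and ψ : ℝ → E a differentiable family of unit vectors (‖ψ(t)‖ = 1 for all t) such that for all t, H(t)(ψ(t)) = λ(t) • ψ(t) for some function λ : ℝ → ℝ. Then the function t ↦ re⟨ψ(t), H(t) ψ(t)⟩ is differentiable with derivative re⟨ψ(t), H′(t) ψ(t)⟩; in particular λ′(t) = re⟨ψ(t), H′(t) ψ(t)⟩. -/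
/-!
Differentiate `⟪ψ, H ψ⟫` by the product rule. Besides `⟪ψ, H′ ψ⟫` this produces
`⟪ψ, H ψ′⟫ + ⟪ψ′, H ψ⟫`, which by symmetry of `H` and `H ψ = λ ψ` equals
`λ (⟪ψ, ψ′⟫ + ⟪ψ′, ψ⟫) = λ · (d/dt) ‖ψ‖² = 0`. Since `‖ψ‖ = 1`, the expectation value is `λ` itself.
-/

open scoped InnerProductSpace

theorem HasDerivAt.clm_apply_of_isScalarTower {𝕜 𝕜' E F : Type*} [NontriviallyNormedField 𝕜]
    [NontriviallyNormedField 𝕜'] [NormedAlgebra 𝕜 𝕜'] [NormedAddCommGroup E] [NormedSpace 𝕜' E]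
    [NormedSpace 𝕜 E] [IsScalarTower 𝕜 𝕜' E] [NormedAddCommGroup F] [NormedSpace 𝕜' F]
    [NormedSpace 𝕜 F] [IsScalarTower 𝕜 𝕜' F] {c : 𝕜 → E →L[𝕜'] F} {c' : E →L[𝕜'] F}
    {u : 𝕜 → E} {u' : E} {x : 𝕜} (hc : HasDerivAt c c' x) (hu : HasDerivAt u u' x) :
    HasDerivAt (fun y => c y (u y)) (c' (u x) + c x u') x := by
  have hc𝕜 : HasDerivAt (fun y => (c y).restrictScalars 𝕜) (c'.restrictScalars 𝕜) x :=
    (ContinuousLinearMap.restrictScalarsL 𝕜' E F 𝕜 𝕜).hasFDerivAt.comp_hasDerivAt x hc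
  exact hc𝕜.clm_apply hu

section

variable {𝕜 E : Type*} [RCLike 𝕜] [NormedAddCommGroup E] [InnerProductSpace 𝕜 E]

theorem LinearMap.IsSymmetric.inner_apply_eq_of_apply_eq_smul {T : E →ₗ[𝕜] E}
    (hT : T.IsSymmetric) {v : E} {μ : ℝ} (hv : T v = (μ : 𝕜) • v) (w : E) :
    ⟪v, T w⟫_𝕜 = μ * ⟪v, w⟫_𝕜 := by
  rw [← hT, hv, inner_smul_left, RCLike.conj_ofReal]

variable [NormedSpace ℝ E]

theorem HasDerivAt.inner_add_inner_eq_zero_of_norm_eq {ψ : ℝ → E} {ψ' : E} {t c : ℝ}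
    (hψ : HasDerivAt ψ ψ' t) (hnorm : ∀ u, ‖ψ u‖ = c) : ⟪ψ t, ψ'⟫_𝕜 + ⟪ψ', ψ t⟫_𝕜 = 0 := by
  have hconst : (fun u => ⟪ψ u, ψ u⟫_𝕜) = fun _ => ((c ^ 2 : ℝ) : 𝕜) := by
    ext u
    rw [inner_self_eq_norm_sq_to_K, hnorm u, RCLike.ofReal_pow]
  have h := hψ.inner 𝕜 hψ
  rw [hconst] at h
  exact h.unique (hasDerivAt_const t _)

variable [IsScalarTower ℝ 𝕜 E]

theorem HasDerivAt.inner_clm_apply {H : ℝ → E →L[𝕜] E} {A : E →L[𝕜] E} {ψ : ℝ → E} {ψ' : E}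
    {t : ℝ} (hH : HasDerivAt H A t) (hψ : HasDerivAt ψ ψ' t) :
    HasDerivAt (fun u => ⟪ψ u, H u (ψ u)⟫_𝕜)
      (⟪ψ t, A (ψ t)⟫_𝕜 + (⟪ψ t, H t ψ'⟫_𝕜 + ⟪ψ', H t (ψ t)⟫_𝕜)) t := by
  have h := hψ.inner 𝕜 (hH.clm_apply_of_isScalarTower hψ)
  rwa [inner_add_right, add_assoc] at h

theorem HasDerivAt.inner_clm_apply_of_apply_eq_smul {H : ℝ → E →L[𝕜] E} {A : E →L[𝕜] E}
    {ψ : ℝ → E} {ψ' : E} {t c μ : ℝ} (hH : HasDerivAt H A t) (hψ : HasDerivAt ψ ψ' t)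
    (hsymm : (H t : E →ₗ[𝕜] E).IsSymmetric) (hnorm : ∀ u, ‖ψ u‖ = c)
    (heig : H t (ψ t) = (μ : 𝕜) • ψ t) :
    HasDerivAt (fun u => ⟪ψ u, H u (ψ u)⟫_𝕜) ⟪ψ t, A (ψ t)⟫_𝕜 t := by
  have hcancel : ⟪ψ t, H t ψ'⟫_𝕜 + ⟪ψ', H t (ψ t)⟫_𝕜 = 0 := by
    rw [← ContinuousLinearMap.coe_coe, hsymm.inner_apply_eq_of_apply_eq_smul heig,
      ContinuousLinearMap.coe_coe, heig, inner_smul_right, ← mul_add,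
      hψ.inner_add_inner_eq_zero_of_norm_eq hnorm, mul_zero]
  simpa only [hcancel, add_zero] using hH.inner_clm_apply hψ

end

/-- **Hellmann–Feynman identity.**
Let `H : ℝ → (E →L[ℂ] E)` be a differentiable family of self-adjoint operators and
`ψ : ℝ → E` a differentiable family of unit eigenvectors, `H(t) ψ(t) = Λ(t) • ψ(t)` with
`Λ : ℝ → ℝ`.  Then `t ↦ re⟨ψ(t), H(t) ψ(t)⟩` is differentiable with derivative
`re⟨ψ(t), H′(t) ψ(t)⟩`; in particular `Λ′(t) = re⟨ψ(t), H′(t) ψ(t)⟩`. -/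
theorem hellmann_feynman
    {E : Type*} [NormedAddCommGroup E] [InnerProductSpace ℂ E] [FiniteDimensional ℂ E]
    (H : ℝ → (E →L[ℂ] E)) (hH : Differentiable ℝ H)
    (hHsa : ∀ t, IsSelfAdjoint (H t))
    (ψ : ℝ → E) (hψ : Differentiable ℝ ψ) (hψnorm : ∀ t, ‖ψ t‖ = 1)
    (Λ : ℝ → ℝ) (heig : ∀ t, (H t) (ψ t) = ((Λ t : ℝ) : ℂ) • ψ t) :
    ∀ t : ℝ,
      HasDerivAt (fun u => (inner ℂ (ψ u) ((H u) (ψ u)) : ℂ).re)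
        ((inner ℂ (ψ t) ((deriv H t) (ψ t)) : ℂ).re) t ∧
      HasDerivAt Λ ((inner ℂ (ψ t) ((deriv H t) (ψ t)) : ℂ).re) t := by
  intro t
  have hexp : HasDerivAt (fun u => (inner ℂ (ψ u) ((H u) (ψ u)) : ℂ).re)
      ((inner ℂ (ψ t) ((deriv H t) (ψ t)) : ℂ).re) t :=
    Complex.reCLM.hasFDerivAt.comp_hasDerivAt t <|
      (hH t).hasDerivAt.inner_clm_apply_of_apply_eq_smul (hψ t).hasDerivAt
        (hHsa t).isSymmetric hψnorm (heig t)
  have hΛ : (fun u => (inner ℂ (ψ u) ((H u) (ψ u)) : ℂ).re) = Λ := by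
    ext u
    rw [heig u, inner_smul_right, inner_self_eq_norm_sq_to_K, hψnorm u]
    simp
  exact ⟨hexp, hΛ ▸ hexp⟩
end

section
/- Quantum contrastive function bounds: Let β > 0. Define λ(β) to be the minimum over unit vectors ψ of re⟨ψ, (H + β • Ĉ) ψ⟩ (the ground-state energy of the total Hamiltonian), and let ψ₀ be a unit vector attaining λ(0), i.e. re⟨ψ₀, H ψ₀⟩ = λ(0). Then (1/β)(λ(β) − λ(0)) ≤ re⟨ψ₀, Ĉ ψ₀⟩ ≤ (1/β)(λ(0) − λ(−β)); that is, the quantum contrastive function with positive nudging lower-bounds, and with negative nudging upper-bounds, the expectation value of the cost observable in the ground state. -/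
/-! A ground state `ψ₀` of `H` is a competitor in the variational problem for `H + γ Ĉ`, where its
energy is `λ(0) + γ re⟨ψ₀, Ĉ ψ₀⟩`; hence `λ(γ) ≤ λ(0) + γ re⟨ψ₀, Ĉ ψ₀⟩` for every real `γ`, and
taking `γ = ±β` and dividing by `β` gives both bounds. -/

open Metric

section GroundEnergy

variable {𝕜 E : Type*} [RCLike 𝕜] [NormedAddCommGroup E] [InnerProductSpace 𝕜 E]

noncomputable def groundEnergy (T : E →L[𝕜] E) : ℝ :=
  ⨅ ψ : sphere (0 : E) 1, RCLike.re (inner 𝕜 (ψ : E) (T ψ))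

theorem re_inner_add_smul_apply (H C : E →L[𝕜] E) (γ : ℝ) (ψ : E) :
    RCLike.re (inner 𝕜 ψ ((H + (γ : 𝕜) • C) ψ)) =
      RCLike.re (inner 𝕜 ψ (H ψ)) + γ * RCLike.re (inner 𝕜 ψ (C ψ)) := by
  rw [add_apply, smul_apply, inner_add_right, inner_smul_right, map_add, RCLike.re_ofReal_mul]

theorem groundEnergy_le_re_inner [ProperSpace E] (T : E →L[𝕜] E) {ψ : E}
    (hψ : ‖ψ‖ = 1) : groundEnergy T ≤ RCLike.re (inner 𝕜 ψ (T ψ)) := by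
  have hcont : Continuous fun ψ : sphere (0 : E) 1 => RCLike.re (inner 𝕜 (ψ : E) (T ψ)) := by
    fun_prop
  exact ciInf_le (isCompact_range hcont).bddBelow ⟨ψ, mem_sphere_zero_iff_norm.mpr hψ⟩

theorem groundEnergy_add_smul_le [ProperSpace E] (H C : E →L[𝕜] E) (γ : ℝ) {ψ₀ : E}
    (hψ₀ : ‖ψ₀‖ = 1) (hground : RCLike.re (inner 𝕜 ψ₀ (H ψ₀)) = groundEnergy H) :
    groundEnergy (H + (γ : 𝕜) • C) ≤ groundEnergy H + γ * RCLike.re (inner 𝕜 ψ₀ (C ψ₀)) := by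
  calc groundEnergy (H + (γ : 𝕜) • C) ≤ RCLike.re (inner 𝕜 ψ₀ ((H + (γ : 𝕜) • C) ψ₀)) :=
        groundEnergy_le_re_inner _ hψ₀
    _ = groundEnergy H + γ * RCLike.re (inner 𝕜 ψ₀ (C ψ₀)) := by
        rw [re_inner_add_smul_apply, hground]

end GroundEnergy

theorem quantum_contrastive_function_bounds_general
    {E : Type*} [NormedAddCommGroup E] [InnerProductSpace ℂ E] [FiniteDimensional ℂ E]
    (H C : E →L[ℂ] E)
    (lam : ℝ → ℝ)
    (hlam : ∀ β : ℝ, lam β =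
      ⨅ ψ : Metric.sphere (0 : E) 1, (inner ℂ (ψ : E) ((H + (β : ℂ) • C) (ψ : E)) : ℂ).re)
    (β : ℝ) (hβ : 0 < β)
    (ψ₀ : E) (hψ₀ : ‖ψ₀‖ = 1)
    (hattain : (inner ℂ ψ₀ (H ψ₀) : ℂ).re = lam 0) :
    (1 / β) * (lam β - lam 0) ≤ (inner ℂ ψ₀ (C ψ₀) : ℂ).re ∧
      (inner ℂ ψ₀ (C ψ₀) : ℂ).re ≤ (1 / β) * (lam 0 - lam (-β)) := by
  have hlam_eq (γ : ℝ) : lam γ = groundEnergy (H + (γ : ℂ) • C) := hlam γ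
  have hlam₀ : lam 0 = groundEnergy H := by simp [hlam_eq]
  have hnudge (γ : ℝ) : lam γ ≤ lam 0 + γ * (inner ℂ ψ₀ (C ψ₀) : ℂ).re := by
    rw [hlam_eq, hlam₀]
    exact groundEnergy_add_smul_le H C γ hψ₀ (hattain.trans hlam₀)
  have hpos := hnudge β
  have hneg := hnudge (-β)
  rw [one_div_mul_eq_div, one_div_mul_eq_div, div_le_iff₀ hβ, le_div_iff₀ hβ]
  constructor <;> linarith

/-- **Quantum contrastive function bounds.**
Let `β > 0` and let `lam β` denote the minimum of the energy expectation value
`re⟨ψ, (H + β Ĉ) ψ⟩` over unit vectors `ψ` (the ground-state energy of the total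
Hamiltonian).  If the unit vector `ψ₀` attains `lam 0`, then
`(1/β)(lam β − lam 0) ≤ re⟨ψ₀, Ĉ ψ₀⟩ ≤ (1/β)(lam 0 − lam (−β))`. -/
theorem quantum_contrastive_function_bounds
    {E : Type*} [NormedAddCommGroup E] [InnerProductSpace ℂ E] [FiniteDimensional ℂ E]
    (H C : E →L[ℂ] E) (hH : IsSelfAdjoint H) (hC : IsSelfAdjoint C)
    (lam : ℝ → ℝ)
    (hlam : ∀ β : ℝ, lam β =
      ⨅ ψ : Metric.sphere (0 : E) 1, (inner ℂ (ψ : E) ((H + (β : ℂ) • C) (ψ : E)) : ℂ).re)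
    (β : ℝ) (hβ : 0 < β)
    (ψ₀ : E) (hψ₀ : ‖ψ₀‖ = 1)
    (hattain : (inner ℂ ψ₀ (H ψ₀) : ℂ).re = lam 0) :
    (1 / β) * (lam β - lam 0) ≤ (inner ℂ ψ₀ (C ψ₀) : ℂ).re ∧
      (inner ℂ ψ₀ (C ψ₀) : ℂ).re ≤ (1 / β) * (lam 0 - lam (-β)) :=
  quantum_contrastive_function_bounds_general H C lam hlam β hβ ψ₀ hψ₀ hattain
end

section
/- Exact gradient of the quantum contrastive function: Fix β ≠ 0. Let H : ℝ → (E →L[ℂ] E) be a differentiable family of self-adjoint operators, Ĉ : E →L[ℂ] E self-adjoint, and let ψ_β, ψ₀ : ℝ → E be differentiable families of unit vectors such that (H(w) + β • Ĉ)(ψ_β(w)) = λ_β(w) • ψ_β(w) and H(w)(ψ₀(w)) = λ₀(w) • ψ₀(w) for real functions λ_β, λ₀. Then the quantum contrastive function w ↦ (1/β)[re⟨ψ_β(w), (H(w) + β • Ĉ) ψ_β(w)⟩ − re⟨ψ₀(w), H(w) ψ₀(w)⟩] is differentiable with derivative (1/β)[re⟨ψ_β(w), H′(w) ψ_β(w)⟩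 − re⟨ψ₀(w), H′(w) ψ₀(w)⟩]. -/
/-!
Both terms are instances of the Hellmann–Feynman theorem: differentiating `re ⟪ψ, A ψ⟫` along a
family of unit eigenvectors gives `re ⟪ψ, A' ψ⟫` plus `re ⟪ψ', A ψ⟫ + re ⟪A ψ, ψ'⟫`, which by the
eigenvalue equation is `2 λ re ⟪ψ, ψ'⟫`, and this vanishes because `‖ψ‖` is constant. The
perturbation `β • Ĉ` does not depend on `w`, so `H + β • Ĉ` has the same derivative as `H`.
-/

open RCLike

section

variable {𝕜 E : Type*} [RCLike 𝕜] [NormedAddCommGroup E] [InnerProductSpace 𝕜 E]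
  [NormedSpace ℝ E]

theorem HasDerivAt.clm_apply_restrictScalars [IsScalarTower ℝ 𝕜 E] {F : Type*}
    [NormedAddCommGroup F] [NormedSpace 𝕜 F] [NormedSpace ℝ F] [IsScalarTower ℝ 𝕜 F]
    {A : ℝ → E →L[𝕜] F} {A' : E →L[𝕜] F} {ψ : ℝ → E} {ψ' : E} {w : ℝ}
    (hA : HasDerivAt A A' w) (hψ : HasDerivAt ψ ψ' w) :
    HasDerivAt (fun t => A t (ψ t)) (A' (ψ w) + A w ψ') w :=
  ((ContinuousLinearMap.restrictScalarsL 𝕜 E F ℝ ℝ).hasFDerivAt.comp_hasDerivAt w hA).clm_apply hψ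

theorem re_inner_eq_zero_of_hasDerivAt_of_norm_eq {ψ : ℝ → E} {ψ' : E} {w c : ℝ}
    (hψ : HasDerivAt ψ ψ' w) (hnorm : ∀ t, ‖ψ t‖ = c) :
    re (inner 𝕜 (ψ w) ψ') = 0 := by
  have hconst : HasDerivAt (fun t => inner 𝕜 (ψ t) (ψ t)) 0 w := by
    simpa only [inner_self_eq_norm_sq_to_K, hnorm] using hasDerivAt_const w ((c : 𝕜) ^ 2)
  have hsum : inner 𝕜 (ψ w) ψ' + inner 𝕜 ψ' (ψ w) = 0 := (hψ.inner 𝕜 hψ).unique hconst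
  have hre := congrArg re hsum
  rw [map_add, inner_re_symm ψ', map_zero] at hre
  linarith

theorem hasDerivAt_re_inner_apply_self_of_eigenvector {A : ℝ → E →L[𝕜] E} {A' : E →L[𝕜] E}
    {ψ : ℝ → E} {ψ' : E} {w c μ : ℝ} [IsScalarTower ℝ 𝕜 E] [CompleteSpace E]
    (hA : HasDerivAt A A' w) (hAsa : IsSelfAdjoint (A w))
    (hψ : HasDerivAt ψ ψ' w) (hnorm : ∀ t, ‖ψ t‖ = c)
    (heig : A w (ψ w) = (μ : 𝕜) • ψ w) :
    HasDerivAt (fun t => re (inner 𝕜 (ψ t) (A t (ψ t)))) (re (inner 𝕜 (ψ w) (A' (ψ w)))) w := by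
  have horth := re_inner_eq_zero_of_hasDerivAt_of_norm_eq (𝕜 := 𝕜) hψ hnorm
  have hderiv := hψ.inner 𝕜 (hA.clm_apply_restrictScalars hψ)
  have hre : re (inner 𝕜 (ψ w) (A' (ψ w) + A w ψ') + inner 𝕜 ψ' (A w (ψ w)))
      = re (inner 𝕜 (ψ w) (A' (ψ w))) := by
    have hsymm : inner 𝕜 (ψ w) (A w ψ') = inner 𝕜 (A w (ψ w)) ψ' :=
      (hAsa.isSymmetric (ψ w) ψ').symm
    rw [inner_add_right, hsymm, heig, inner_smul_left, inner_smul_right]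
    simp [horth, inner_re_symm ψ']
  simpa only [Function.comp_def, reCLM_apply, hre] using reCLM.hasFDerivAt.comp_hasDerivAt w hderiv

end

theorem exact_gradient_of_quantum_contrastive_function_general
    {E : Type*} [NormedAddCommGroup E] [InnerProductSpace ℂ E] [FiniteDimensional ℂ E]
    (β : ℝ)
    (H : ℝ → (E →L[ℂ] E)) (hH : Differentiable ℝ H)
    (hHsa : ∀ w, IsSelfAdjoint (H w))
    (C : E →L[ℂ] E) (hC : IsSelfAdjoint C)
    (ψβ ψ₀ : ℝ → E) (hψβ : Differentiable ℝ ψβ) (hψ₀ : Differentiable ℝ ψ₀)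
    (hψβnorm : ∀ w, ‖ψβ w‖ = 1) (hψ₀norm : ∀ w, ‖ψ₀ w‖ = 1)
    (Λβ Λ₀ : ℝ → ℝ)
    (heigβ : ∀ w, (H w + (β : ℂ) • C) (ψβ w) = ((Λβ w : ℝ) : ℂ) • ψβ w)
    (heig₀ : ∀ w, (H w) (ψ₀ w) = ((Λ₀ w : ℝ) : ℂ) • ψ₀ w) :
    ∀ w : ℝ,
      HasDerivAt
        (fun w' => (1 / β) *
          ((inner ℂ (ψβ w') ((H w' + (β : ℂ) • C) (ψβ w')) : ℂ).re -
            (inner ℂ (ψ₀ w') ((H w') (ψ₀ w')) : ℂ).re))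
        ((1 / β) *
          ((inner ℂ (ψβ w) ((deriv H w) (ψβ w)) : ℂ).re -
            (inner ℂ (ψ₀ w) ((deriv H w) (ψ₀ w)) : ℂ).re))
        w := by
  intro w
  have hH₀ : HasDerivAt H (deriv H w) w := (hH w).hasDerivAt
  have hHβ : HasDerivAt (fun t => H t + (β : ℂ) • C) (deriv H w) w := hH₀.add_const _
  have hHβsa : IsSelfAdjoint (H w + (β : ℂ) • C) :=
    (hHsa w).add (IsSelfAdjoint.smul (Complex.conj_ofReal β) hC)
  have hβ := hasDerivAt_re_inner_apply_self_of_eigenvector hHβ hHβsa (hψβ w).hasDerivAt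
    hψβnorm (heigβ w)
  have h₀ := hasDerivAt_re_inner_apply_self_of_eigenvector hH₀ (hHsa w) (hψ₀ w).hasDerivAt
    hψ₀norm (heig₀ w)
  exact (hβ.sub h₀).const_mul (1 / β)

/-- **Exact gradient of the quantum contrastive function.**
Fix `β ≠ 0`.  Let `H : ℝ → (E →L[ℂ] E)` be a differentiable family of self-adjoint
Hamiltonians, `Ĉ` a self-adjoint cost observable, and `ψβ(w)`, `ψ₀(w)` differentiable
families of unit eigenvectors of `H(w) + β Ĉ` and `H(w)` respectively.  Then the quantum
contrastive function
`w ↦ (1/β)[re⟨ψβ(w), (H(w) + β Ĉ) ψβ(w)⟩ − re⟨ψ₀(w), H(w) ψ₀(w)⟩]`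
is differentiable with derivative
`(1/β)[re⟨ψβ(w), H′(w) ψβ(w)⟩ − re⟨ψ₀(w), H′(w) ψ₀(w)⟩]`. -/
theorem exact_gradient_of_quantum_contrastive_function
    {E : Type*} [NormedAddCommGroup E] [InnerProductSpace ℂ E] [FiniteDimensional ℂ E]
    (β : ℝ) (hβ : β ≠ 0)
    (H : ℝ → (E →L[ℂ] E)) (hH : Differentiable ℝ H)
    (hHsa : ∀ w, IsSelfAdjoint (H w))
    (C : E →L[ℂ] E) (hC : IsSelfAdjoint C)
    (ψβ ψ₀ : ℝ → E) (hψβ : Differentiable ℝ ψβ) (hψ₀ : Differentiable ℝ ψ₀)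
    (hψβnorm : ∀ w, ‖ψβ w‖ = 1) (hψ₀norm : ∀ w, ‖ψ₀ w‖ = 1)
    (Λβ Λ₀ : ℝ → ℝ)
    (heigβ : ∀ w, (H w + (β : ℂ) • C) (ψβ w) = ((Λβ w : ℝ) : ℂ) • ψβ w)
    (heig₀ : ∀ w, (H w) (ψ₀ w) = ((Λ₀ w : ℝ) : ℂ) • ψ₀ w) :
    ∀ w : ℝ,
      HasDerivAt
        (fun w' => (1 / β) *
          ((inner ℂ (ψβ w') ((H w' + (β : ℂ) • C) (ψβ w')) : ℂ).re -
            (inner ℂ (ψ₀ w') ((H w') (ψ₀ w')) : ℂ).re))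
        ((1 / β) *
          ((inner ℂ (ψβ w) ((deriv H w) (ψβ w)) : ℂ).re -
            (inner ℂ (ψ₀ w) ((deriv H w) (ψ₀ w)) : ℂ).re))
        w :=
  exact_gradient_of_quantum_contrastive_function_general β H hH hHsa C hC ψβ ψ₀ hψβ hψ₀ hψβnorm
    hψ₀norm Λβ Λ₀ heigβ heig₀
end
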